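/- arXiv:0906.0453 — 2 statements merged into one kernel-verified Lean document; each statement's English description precedes it below -/
import Mathlib

section
/- Let U be a nonempty convex subset of a separated locally convex space X with qri(U) ≠ ∅. Then cl(cone(qri(U))) = cl(cone(U)). -/
/-! Fix `x ∈ qri U` with `closure (coneHull (U - {x})) = M`. Every point `z` of an open segment
`]x, u[` with `u ∈ U` is again in `qri U`: `U - {z}` still lies in the subspace `M`, while
`U - {x}` lies in `coneHull (U - {z})`, so the closed cone at `z` is `M` as well. Hence
`U ⊆ closure (qri U)`, and taking closed conic hulls gives the theorem. -/

open Set Pointwise Topology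

/-- The conic hull: cone(S) = ⋃_{t ≥ 0} t • S. -/
def coneHull {E : Type*} [AddCommGroup E] [Module ℝ E] (S : Set E) : Set E :=
  {x | ∃ t : ℝ, 0 ≤ t ∧ ∃ s ∈ S, x = t • s}

/-- The quasi-relative interior. -/
def qri {E : Type*} [AddCommGroup E] [Module ℝ E] [TopologicalSpace E] (U : Set E) : Set E :=
  {x | x ∈ U ∧ ∃ M : Submodule ℝ E, closure (coneHull (U - {x})) = (M : Set E)}

/-- The quasi interior. -/
def qi {E : Type*} [AddCommGroup E] [Module ℝ E] [TopologicalSpace E] (U : Set E) : Set E :=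
  {x | x ∈ U ∧ closure (coneHull (U - {x})) = Set.univ}

/-- The algebraic interior (core). -/
def algCore {E : Type*} [AddCommGroup E] [Module ℝ E] (U : Set E) : Set E :=
  {x | x ∈ U ∧ coneHull (U - {x}) = Set.univ}

/-- The relative algebraic interior (intrinsic core). -/
def icr {E : Type*} [AddCommGroup E] [Module ℝ E] (U : Set E) : Set E :=
  {x | x ∈ U ∧ ∃ M : Submodule ℝ E, coneHull (U - {x}) = (M : Set E)}

/-- The strong quasi-relative interior. -/
def sqri {E : Type*} [AddCommGroup E] [Module ℝ E] [TopologicalSpace E] (U : Set E) : Set E :=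
  {x | x ∈ U ∧ ∃ M : Submodule ℝ E, coneHull (U - {x}) = (M : Set E) ∧ IsClosed (M : Set E)}

/-- The normal cone of U at x. -/
def normalCone {E : Type*} [AddCommGroup E] [Module ℝ E] [TopologicalSpace E]
    (U : Set E) (x : E) : Set (E →L[ℝ] ℝ) :=
  {f | ∀ y ∈ U, f (y - x) ≤ 0}

section ConeHull

variable {E : Type*} [AddCommGroup E] [Module ℝ E] {S T : Set E}

lemma subset_coneHull : S ⊆ coneHull S :=
  fun s hs => ⟨1, zero_le_one, s, hs, (one_smul ℝ s).symm⟩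

lemma coneHull_mono (h : S ⊆ T) : coneHull S ⊆ coneHull T := by
  rintro _ ⟨t, ht, s, hs, rfl⟩
  exact ⟨t, ht, s, h hs, rfl⟩

lemma coneHull_subset_of_subset_coneHull (h : S ⊆ coneHull T) : coneHull S ⊆ coneHull T := by
  rintro _ ⟨t, ht, s, hs, rfl⟩
  obtain ⟨r, hr, v, hv, rfl⟩ := h hs
  exact ⟨t * r, mul_nonneg ht hr, v, hv, smul_smul t r v⟩

lemma coneHull_subset_submodule {M : Submodule ℝ E} (h : S ⊆ M) : coneHull S ⊆ M := by
  rintro _ ⟨t, -, s, hs, rfl⟩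
  exact M.smul_mem t (h hs)

lemma coneHull_closure_subset_closure_coneHull [TopologicalSpace E] [ContinuousConstSMul ℝ E] :
    coneHull (closure S) ⊆ closure (coneHull S) := by
  rintro _ ⟨t, ht, s, hs, rfl⟩
  exact map_mem_closure (continuous_const_smul t) hs fun y hy => ⟨t, ht, y, hy, rfl⟩

end ConeHull

section QuasiRelativeInterior

variable {E : Type*} [AddCommGroup E] [Module ℝ E] {U : Set E} {x u z : E}

lemma Convex.coneHull_sub_subset_of_mem_openSegment (hU : Convex ℝ U) (hu : u ∈ U)
    (hz : z ∈ openSegment ℝ x u) : coneHull (U - {x}) ⊆ coneHull (U - {z}) := by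
  obtain ⟨a, b, ha, hb, hab, rfl⟩ := hz
  refine coneHull_subset_of_subset_coneHull ?_
  rw [sub_singleton]
  rintro _ ⟨y, hy, rfl⟩
  refine ⟨a⁻¹, inv_nonneg.2 ha.le, a • y + b • u - (a • x + b • u),
    ⟨_, hU hy hu ha.le hb.le hab, _, rfl, rfl⟩, ?_⟩
  rw [add_sub_add_right_eq_sub, ← smul_sub, inv_smul_smul₀ ha.ne']

lemma sub_singleton_subset_submodule_of_mem_segment {M : Submodule ℝ E} (hM : U - {x} ⊆ M)
    (hu : u ∈ U) (hz : z ∈ segment ℝ x u) : U - {z} ⊆ M := by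
  obtain ⟨a, b, -, -, hab, rfl⟩ := hz
  obtain rfl : a = 1 - b := by linarith
  rw [sub_singleton]
  rintro _ ⟨y, hy, rfl⟩
  dsimp only
  rw [show y - ((1 - b) • x + b • u) = (y - x) - b • (u - x) by module]
  exact M.sub_mem (hM ⟨y, hy, x, rfl, rfl⟩) (M.smul_mem b (hM ⟨u, hu, x, rfl, rfl⟩))

variable [TopologicalSpace E]

lemma qri_subset : qri U ⊆ U := fun _ hx => hx.1

lemma Convex.openSegment_subset_qri (hU : Convex ℝ U) (hx : x ∈ qri U) (hu : u ∈ U) :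
    openSegment ℝ x u ⊆ qri U := by
  obtain ⟨hxU, M, hM⟩ := hx
  intro z hz
  have hMx : U - {x} ⊆ M := fun v hv => hM ▸ subset_closure (subset_coneHull hv)
  have hMz : U - {z} ⊆ M :=
    sub_singleton_subset_submodule_of_mem_segment hMx hu (openSegment_subset_segment ℝ x u hz)
  refine ⟨hU.openSegment_subset hxU hu hz, M, subset_antisymm ?_ ?_⟩
  · exact closure_minimal (coneHull_subset_submodule hMz) (hM ▸ isClosed_closure)
  · exact hM ▸ closure_mono (hU.coneHull_sub_subset_of_mem_openSegment hu hz)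

lemma Convex.subset_closure_qri [ContinuousAdd E] [ContinuousSMul ℝ E] (hU : Convex ℝ U)
    (h : (qri U).Nonempty) : U ⊆ closure (qri U) := by
  obtain ⟨x, hx⟩ := h
  intro u hu
  exact closure_mono (hU.openSegment_subset_qri hx hu)
    (segment_subset_closure_openSegment (right_mem_segment ℝ x u))

end QuasiRelativeInterior

theorem closure_coneHull_qri_eq_general
    {X : Type*} [AddCommGroup X] [Module ℝ X] [TopologicalSpace X]
    [IsTopologicalAddGroup X] [ContinuousSMul ℝ X]
    (U : Set X) (hconv : Convex ℝ U) (hqri : (qri U).Nonempty) :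
    closure (coneHull (qri U)) = closure (coneHull U) := by
  refine (closure_mono (coneHull_mono qri_subset)).antisymm ?_
  have hcone : coneHull U ⊆ closure (coneHull (qri U)) :=
    (coneHull_mono (hconv.subset_closure_qri hqri)).trans coneHull_closure_subset_closure_coneHull
  exact closure_minimal hcone isClosed_closure

theorem closure_coneHull_qri_eq
    {X : Type*} [AddCommGroup X] [Module ℝ X] [TopologicalSpace X]
    [IsTopologicalAddGroup X] [ContinuousSMul ℝ X] [LocallyConvexSpace ℝ X] [T2Space X]
    (U : Set X) (hne : U.Nonempty) (hconv : Convex ℝ U) (hqri : (qri U).Nonempty) :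
    closure (coneHull (qri U)) = closure (coneHull U) :=
  closure_coneHull_qri_eq_general U hconv hqri
end

section
/- Let Φ : X × Y → ℝ ∪ {±∞} be proper with v := inf_x Φ(x,0) ∈ ℝ and with pr_{Y×ℝ}(epi Φ) convex. If 0 ∈ qi(pr_Y(dom Φ)) and (0,0) ∉ qri(co(pr_{Y×ℝ}(epi(Φ - v)) ∪ {(0,0)})), then inf_{x∈X} Φ(x,0) = max_{y* ∈ Y*} (−Φ*(0, y*)), i.e., strong duality holds with dual attainment. -/
/-!
The `qri` hypothesis says that the closed cone generated by `co(pr_{Y×ℝ}(epi(Φ - v)) ∪ {0})` is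
not a subspace, so Hahn–Banach yields a nonzero functional `f = (g, α)` in its normal cone at the
origin. Since the infimum is `v`, the point `(0, 1)` lies in `pr_{Y×ℝ}(epi(Φ - v))`, whence
`α ≤ 0`; and `α = 0` would make `g` a nonzero normal to `pr_Y(dom Φ)` at `0`, which the
quasi-interior hypothesis forbids. Hence `y* = g / (-α)` satisfies `y*(y) + v ≤ Φ(x, y)`, so the
dual value is at least `v`, and weak duality gives the reverse inequality.
-/

open Set Pointwise Topology

section ConvexAnalysis

variable {E : Type*} [AddCommGroup E] [Module ℝ E]

theorem coneHull_eq_hull_of_convex {S : Set E} (hS : Convex ℝ S) (h0 : (0 : E) ∈ S) :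
    coneHull S = ConvexCone.hull ℝ S := by
  ext x
  rw [SetLike.mem_coe, ConvexCone.mem_hull_of_convex hS]
  constructor
  · rintro ⟨t, ht, s, hs, rfl⟩
    rcases ht.eq_or_lt with rfl | ht
    · exact ⟨1, one_pos, by simpa using h0⟩
    · exact ⟨t, ht, smul_mem_smul_set hs⟩
  · rintro ⟨t, ht, s, hs, rfl⟩
    exact ⟨t, ht.le, s, hs, rfl⟩

variable [TopologicalSpace E]

theorem normalCone_anti {U V : Set E} (h : U ⊆ V) (x : E) : normalCone V x ⊆ normalCone U x :=
  fun _ hf y hy ↦ hf y (h hy)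

theorem eq_zero_of_mem_normalCone_of_mem_qi {U : Set E} {x : E} {f : E →L[ℝ] ℝ}
    (hx : x ∈ qi U) (hf : f ∈ normalCone U x) : f = 0 := by
  have hcone : coneHull (U - {x}) ⊆ {y | f y ≤ 0} := by
    rintro _ ⟨t, ht, _, ⟨y, hy, _, rfl, rfl⟩, rfl⟩
    simpa using mul_nonpos_of_nonneg_of_nonpos ht (hf y hy)
  have hle : ∀ y, f y ≤ 0 := fun y ↦
    (closure_minimal hcone (isClosed_le f.continuous continuous_const)) (hx.2 ▸ mem_univ y)
  ext y
  simpa using le_antisymm (hle y) (by simpa using hle (-y))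

variable [IsTopologicalAddGroup E] [ContinuousSMul ℝ E] [LocallyConvexSpace ℝ E]

theorem exists_ne_zero_mem_normalCone_of_notMem_qri {U : Set E} {x : E} (hU : Convex ℝ U)
    (hx : x ∈ U) (hqri : x ∉ qri U) : ∃ f ∈ normalCone U x, f ≠ 0 := by
  have hS : Convex ℝ (U - {x}) := hU.sub (convex_singleton x)
  have h0 : (0 : E) ∈ U - {x} := ⟨x, hx, x, rfl, sub_self x⟩
  let K : ProperCone ℝ E :=
    Submodule.closure ((ConvexCone.hull ℝ (U - {x})).toPointedCone (ConvexCone.subset_hull h0))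
  have hK : (K : Set E) = closure (coneHull (U - {x})) := by
    rw [coneHull_eq_hull_of_convex hS h0]
    rfl
  -- if `K` were symmetric it would be its own lineality space, putting `x` in `qri U`
  obtain ⟨z, -, hnz⟩ : ∃ z ∈ K, -z ∉ K := by
    by_contra! hsymm
    refine hqri ⟨hx, (K : PointedCone ℝ E).lineal, ?_⟩
    rw [← hK]
    ext y
    simpa using fun hy ↦ hsymm y hy
  obtain ⟨f, hfK, hfz⟩ := K.hyperplane_separation_point hnz
  refine ⟨-f, fun y hy ↦ ?_, fun hf ↦ by simp [neg_eq_zero.mp hf] at hfz⟩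
  have hyK : y - x ∈ (K : Set E) :=
    hK ▸ subset_closure ⟨1, zero_le_one, y - x, ⟨y, hy, x, rfl, rfl⟩, (one_smul ℝ _).symm⟩
  simpa using hfK _ hyK

end ConvexAnalysis

section Duality

variable {X Y : Type*} [AddCommGroup Y] [Module ℝ Y] [TopologicalSpace Y]

/-- `pr_{Y×ℝ}(epi(Φ - v))`. -/
def projEpi (Φ : X × Y → EReal) (v : ℝ) : Set (Y × ℝ) :=
  {p | ∃ x : X, Φ (x, p.1) ≤ ((p.2 + v : ℝ) : EReal)}

/-- `pr_Y(dom Φ)`. -/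
def projDom (Φ : X × Y → EReal) : Set Y :=
  {y | ∃ x : X, Φ (x, y) ≠ ⊤}

variable {Φ : X × Y → EReal} {v : ℝ} {f : Y × ℝ →L[ℝ] ℝ}

theorem ContinuousLinearMap.apply_prod_real (f : Y × ℝ →L[ℝ] ℝ) (y : Y) (r : ℝ) :
    f (y, r) = f (y, 0) + r * f (0, 1) := by
  rw [← smul_eq_mul, ← map_smul, ← map_add]
  simp

theorem apply_zero_one_le_zero (hv : ⨅ x, Φ (x, 0) = v) (hf : f ∈ normalCone (projEpi Φ v) 0) :
    f (0, 1) ≤ 0 := by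
  obtain ⟨x, hx⟩ : ∃ x, Φ (x, 0) < ((1 + v : ℝ) : EReal) := by
    rw [← iInf_lt_iff, hv, EReal.coe_lt_coe_iff]
    linarith
  simpa using hf (0, 1) ⟨x, hx.le⟩

theorem apply_zero_one_ne_zero (hqi : (0 : Y) ∈ qi (projDom Φ))
    (hf : f ∈ normalCone (projEpi Φ v) 0) (hf0 : f ≠ 0) : f (0, 1) ≠ 0 := by
  intro hα
  have hg : f.comp (.inl ℝ Y ℝ) ∈ normalCone (projDom Φ) 0 := by
    rintro y ⟨x, hx⟩
    obtain ⟨r, hr, -⟩ := EReal.lt_iff_exists_real_btwn.mp (lt_top_iff_ne_top.mpr hx)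
    have hfy := hf (y, r - v) ⟨x, by simpa using hr.le⟩
    rw [sub_zero, f.apply_prod_real, hα, mul_zero, add_zero] at hfy
    simpa using hfy
  have hg0 := eq_zero_of_mem_normalCone_of_mem_qi hqi hg
  refine hf0 (ContinuousLinearMap.ext fun ⟨y, r⟩ ↦ ?_)
  rw [f.apply_prod_real, hα, mul_zero, add_zero]
  exact congr($hg0 y)

theorem exists_affine_minorant_of_mem_normalCone (hf : f ∈ normalCone (projEpi Φ v) 0)
    (hα : f (0, 1) < 0) : ∃ ystar : Y →L[ℝ] ℝ, ∀ p, ((ystar p.2 + v : ℝ) : EReal) ≤ Φ p := by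
  refine ⟨(-f (0, 1))⁻¹ • f.comp (.inl ℝ Y ℝ), fun ⟨x, y⟩ ↦ ?_⟩
  refine EReal.le_of_forall_lt_iff_le.mp fun s hs ↦ EReal.coe_le_coe_iff.mpr ?_
  have hfs := hf (y, s - v) ⟨x, by simpa using hs.le⟩
  rw [sub_zero, f.apply_prod_real] at hfs
  have hy : (-f (0, 1))⁻¹ * f (y, 0) ≤ s - v := by
    rw [inv_mul_le_iff₀ (neg_pos.mpr hα)]
    linarith
  simpa using (le_sub_iff_add_le.mp hy)

theorem neg_iSup_sub_le_iInf (Φ : X × Y → EReal) (ystar : Y →L[ℝ] ℝ) :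
    -(⨆ p : X × Y, ((ystar p.2 : ℝ) : EReal) - Φ p) ≤ ⨅ x, Φ (x, 0) :=
  le_iInf fun x ↦ EReal.neg_le.mpr (le_iSup_of_le (x, 0) (by simp))

theorem le_neg_iSup_sub_of_forall_le {ystar : Y →L[ℝ] ℝ}
    (h : ∀ p, ((ystar p.2 + v : ℝ) : EReal) ≤ Φ p) :
    (v : EReal) ≤ -(⨆ p : X × Y, ((ystar p.2 : ℝ) : EReal) - Φ p) := by
  rw [EReal.le_neg]
  refine iSup_le fun p ↦ EReal.sub_le_of_le_add ?_
  calc ((ystar p.2 : ℝ) : EReal) = ((-v : ℝ) : EReal) + ((ystar p.2 + v : ℝ) : EReal) := by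
        rw [← EReal.coe_add]; ring_nf
    _ ≤ ((-v : ℝ) : EReal) + Φ p := add_le_add_right (h p) _

end Duality

theorem strong_duality_of_qi_qri_general
    {X Y : Type*}
    [AddCommGroup Y] [Module ℝ Y] [TopologicalSpace Y] [IsTopologicalAddGroup Y]
    [ContinuousSMul ℝ Y] [LocallyConvexSpace ℝ Y]
    (Φ : X × Y → EReal)
    (v : ℝ) (hv : (⨅ x : X, Φ (x, 0)) = (v : EReal))
    (hqi : (0 : Y) ∈ qi {y : Y | ∃ x : X, Φ (x, y) ≠ ⊤})
    (hqri : ((0 : Y), (0 : ℝ)) ∉ qri (convexHull ℝ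
      ({p : Y × ℝ | ∃ x : X, Φ (x, p.1) ≤ ((p.2 + v : ℝ) : EReal)} ∪ {(0, 0)}))) :
    ∃ ystar : Y →L[ℝ] ℝ,
      (-(⨆ p : X × Y, ((ystar p.2 : ℝ) : EReal) - Φ p) = (v : EReal)) ∧
      ∀ zstar : Y →L[ℝ] ℝ,
        -(⨆ p : X × Y, ((zstar p.2 : ℝ) : EReal) - Φ p) ≤ (v : EReal) := by
  obtain ⟨f, hf, hf0⟩ := exists_ne_zero_mem_normalCone_of_notMem_qri
    (U := convexHull ℝ (projEpi Φ v ∪ {0})) (convex_convexHull ℝ _)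
    (subset_convexHull ℝ _ (Or.inr rfl)) hqri
  have hfA : f ∈ normalCone (projEpi Φ v) 0 :=
    normalCone_anti (subset_union_left.trans (subset_convexHull ℝ _)) _ hf
  have hα : f (0, 1) < 0 :=
    (apply_zero_one_le_zero hv hfA).lt_of_ne (apply_zero_one_ne_zero hqi hfA hf0)
  obtain ⟨ystar, hystar⟩ := exists_affine_minorant_of_mem_normalCone hfA hα
  have weak (zstar : Y →L[ℝ] ℝ) : -(⨆ p : X × Y, ((zstar p.2 : ℝ) : EReal) - Φ p) ≤ v :=
    hv ▸ neg_iSup_sub_le_iInf Φ zstar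
  exact ⟨ystar, (weak ystar).antisymm (le_neg_iSup_sub_of_forall_le hystar), weak⟩

theorem strong_duality_of_qi_qri
    {X Y : Type*}
    [AddCommGroup X] [Module ℝ X] [TopologicalSpace X] [IsTopologicalAddGroup X]
    [ContinuousSMul ℝ X] [LocallyConvexSpace ℝ X] [T2Space X]
    [AddCommGroup Y] [Module ℝ Y] [TopologicalSpace Y] [IsTopologicalAddGroup Y]
    [ContinuousSMul ℝ Y] [LocallyConvexSpace ℝ Y] [T2Space Y]
    (Φ : X × Y → EReal)
    (hbot : ∀ p, Φ p ≠ ⊥) (hdom : ∃ p, Φ p ≠ ⊤)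
    (v : ℝ) (hv : (⨅ x : X, Φ (x, 0)) = (v : EReal))
    (hconv : Convex ℝ {p : Y × ℝ | ∃ x : X, Φ (x, p.1) ≤ (p.2 : EReal)})
    (hqi : (0 : Y) ∈ qi {y : Y | ∃ x : X, Φ (x, y) ≠ ⊤})
    (hqri : ((0 : Y), (0 : ℝ)) ∉ qri (convexHull ℝ
      ({p : Y × ℝ | ∃ x : X, Φ (x, p.1) ≤ ((p.2 + v : ℝ) : EReal)} ∪ {(0, 0)}))) :
    ∃ ystar : Y →L[ℝ] ℝ,
      (-(⨆ p : X × Y, ((ystar p.2 : ℝ) : EReal) - Φ p) = (v : EReal)) ∧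
      ∀ zstar : Y →L[ℝ] ℝ,
        -(⨆ p : X × Y, ((zstar p.2 : ℝ) : EReal) - Φ p) ≤ (v : EReal) :=
  strong_duality_of_qi_qri_general Φ v hv hqi hqri
end
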